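/- Let X be a finite set, H a complex Hilbert space, and (E_{x,x',a,a'})_{x,x',a,a'∈X} a stochastic operator matrix over (X,X) acting on H. Then there exist a complex Hilbert space K, an isometry W : H → K, and a family (U_{a,x})_{a,x∈X} of bounded operators on K whose block operator matrix is a unitary operator on K^X, such that E_{x,x',a,a'} = W* U_{a,x}* U_{a',x'} W for all x, x', a, a' ∈ X. -/

import Mathlib

/-!
Positivity of the block operator `M = (E_{(x,a),(x',a')})` on `L = H^{X × X}` gives a
factorisation `M = R* R`, hence `E_{x,x',a,a'} = S_{x,a}* S_{x',a'}` with `S_{x,a} : H → L` the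
`(x,a)`-th column of `R`. The trace condition says that the operator matrix `V_{a,x} = S_{x,a}` is
an isometry `H^X → L^X`. Inside `K = H ⊕ L` it becomes a partial isometry whose initial projection
`q = diag(P_H)` is orthogonal to its range, and the self-adjoint unitary
`[[0, V*], [V, 1 - VV*]]` restricts to `V` on `H^X`; compressing to `H` gives back `E`.
-/

open ContinuousLinearMap
open scoped InnerProductSpace ComplexOrder

section UnitaryDilation

variable {R : Type*} [Ring R] [StarRing R]

/-- In the decomposition `1 = q + (1 - q)`, for `v` mapping `q` into `1 - q`, this is the block
matrix `[[0, v*], [v, 1 - q - v v*]]`. -/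
def unitaryDilation (q v : R) : R := v + star v + (1 - q - v * star v)

variable {q v : R}

theorem isStarProjection_of_star_mul_self (hv : star v * v = q) (hvq : v * q = v) :
    IsStarProjection q where
  isIdempotentElem := by
    rw [IsIdempotentElem]; nth_rw 1 [← hv]; rw [mul_assoc, hvq, hv]
  isSelfAdjoint := by rw [← hv]; exact .star_mul_self v

theorem isSelfAdjoint_unitaryDilation (hq : IsSelfAdjoint q) :
    IsSelfAdjoint (unitaryDilation q v) := by
  simp only [IsSelfAdjoint, unitaryDilation, star_add, star_sub, star_one, star_star, star_mul,
    hq.star_eq]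
  abel

variable (hv : star v * v = q) (hvq : v * q = v) (hqv : q * v = 0)
include hv hvq hqv

theorem unitaryDilation_mul_self : unitaryDilation q v * unitaryDilation q v = 1 := by
  have hq := isStarProjection_of_star_mul_self hv hvq
  have hvv : v * v = 0 := by nth_rw 1 [← hvq]; rw [mul_assoc, hqv, mul_zero]
  set f := 1 - q - v * star v with f_def
  have hf : star f = f := by
    simp only [f_def, star_sub, star_one, hq.isSelfAdjoint.star_eq, star_mul, star_star]
  have hvf : v * f = 0 := by
    rw [f_def, mul_sub, mul_sub, mul_one, hvq, ← mul_assoc, hvv, zero_mul, sub_self, sub_zero]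
  have hfv : f * v = 0 := by
    rw [f_def, sub_mul, sub_mul, one_mul, hqv, mul_assoc, hv, hvq, sub_zero, sub_self]
  have hqf : q * f = 0 := by
    rw [f_def, mul_sub, mul_sub, mul_one, hq.isIdempotentElem.eq, ← mul_assoc, hqv, zero_mul,
      sub_self, sub_zero]
  have hff : f * f = f := by
    conv_lhs => rw [f_def, sub_mul, sub_mul, one_mul, ← f_def, hqf, mul_assoc]
    rw [← hf, ← star_mul, hfv, star_zero, hf, mul_zero, sub_zero, sub_zero]
  calc unitaryDilation q v * unitaryDilation q v
      = v * v + star (v * v) + v * f + star (v * f) + (star v * v + v * star v)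
        + (f * v + star (f * v) + f * f) := by
        show (v + star v + f) * (v + star v + f) = _
        simp only [star_mul, hf]; noncomm_ring
    _ = 1 := by
        rw [hvv, hvf, hfv, star_zero, hv, hff, f_def]
        abel

theorem unitaryDilation_mem_unitary : unitaryDilation q v ∈ unitary R := by
  have h := unitaryDilation_mul_self hv hvq hqv
  have hsa := (isSelfAdjoint_unitaryDilation (v := v)
    (isStarProjection_of_star_mul_self hv hvq).isSelfAdjoint).star_eq
  exact Unitary.mem_iff.2 ⟨by rw [hsa, h], by rw [hsa, h]⟩

theorem unitaryDilation_mul : unitaryDilation q v * q = v := by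
  have hq := isStarProjection_of_star_mul_self hv hvq
  have hsvq : star v * q = 0 := by rw [← hq.isSelfAdjoint.star_eq, ← star_mul, hqv, star_zero]
  simp only [unitaryDilation, add_mul, sub_mul, one_mul, hvq, hsvq, hq.isIdempotentElem.eq,
    mul_assoc, mul_zero]
  abel

end UnitaryDilation

namespace PiLp

variable {𝕜 : Type*} [RCLike 𝕜] {ι : Type*} [Fintype ι]
  {H : Type*} [NormedAddCommGroup H] [InnerProductSpace 𝕜 H]

def blockOp (T : ι → ι → H →L[𝕜] H) : PiLp 2 (fun _ : ι => H) →L[𝕜] PiLp 2 (fun _ : ι => H) :=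
  (PiLp.continuousLinearEquiv 2 𝕜 (fun _ : ι => H)).symm.toContinuousLinearMap ∘L
    ContinuousLinearMap.pi fun i => ∑ j, T i j ∘L PiLp.proj 2 (fun _ : ι => H) j

@[simp]
theorem blockOp_apply (T : ι → ι → H →L[𝕜] H) (l : PiLp 2 (fun _ : ι => H)) (i : ι) :
    blockOp T l i = ∑ j, T i j (l j) := by
  simp [blockOp]

theorem inner_blockOp_self (T : ι → ι → H →L[𝕜] H) (l : PiLp 2 (fun _ : ι => H)) :
    ⟪blockOp T l, l⟫_𝕜 = ∑ i, ∑ j, ⟪T i j (l j), l i⟫_𝕜 := by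
  simp [PiLp.inner_apply, sum_inner]

variable [DecidableEq ι]

variable (𝕜 H) in
def singleL (i : ι) : H →L[𝕜] PiLp 2 (fun _ : ι => H) :=
  (PiLp.continuousLinearEquiv 2 𝕜 (fun _ : ι => H)).symm.toContinuousLinearMap ∘L
    ContinuousLinearMap.single 𝕜 (fun _ : ι => H) i

omit [Fintype ι] in
@[simp]
theorem singleL_apply (i : ι) (h : H) : singleL 𝕜 H i h = PiLp.single 2 i h := rfl

theorem inner_single_right (i : ι) (h : H) (l : PiLp 2 (fun _ : ι => H)) :
    ⟪l, PiLp.single 2 i h⟫_𝕜 = ⟪l i, h⟫_𝕜 := by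
  rw [PiLp.inner_apply, Finset.sum_eq_single i (fun j _ hj => by simp [hj]) (by simp)]
  simp

theorem adjoint_singleL [CompleteSpace H] (i : ι) :
    adjoint (singleL 𝕜 H i) = PiLp.proj 2 (fun _ : ι => H) i :=
  ((eq_adjoint_iff _ _).2 fun l h => (inner_single_right i h l).symm).symm

theorem proj_comp_blockOp_comp_singleL (T : ι → ι → H →L[𝕜] H) (i j : ι) :
    PiLp.proj 2 (fun _ : ι => H) i ∘L blockOp T ∘L singleL 𝕜 H j = T i j := by
  ext h
  simp [apply_ite (T i _)]

end PiLp

namespace WithLp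

variable {𝕜 : Type*} [RCLike 𝕜] {E F : Type*} [NormedAddCommGroup E] [InnerProductSpace 𝕜 E]
  [NormedAddCommGroup F] [InnerProductSpace 𝕜 F]

variable (𝕜 E F) in
def inlL : E →L[𝕜] WithLp 2 (E × F) :=
  (prodContinuousLinearEquiv 2 𝕜 E F).symm.toContinuousLinearMap ∘L ContinuousLinearMap.inl 𝕜 E F

variable (𝕜 E F) in
def inrL : F →L[𝕜] WithLp 2 (E × F) :=
  (prodContinuousLinearEquiv 2 𝕜 E F).symm.toContinuousLinearMap ∘L ContinuousLinearMap.inr 𝕜 E F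

@[simp]
theorem inlL_apply (x : E) : inlL 𝕜 E F x = toLp 2 (x, 0) := rfl

@[simp]
theorem inrL_apply (y : F) : inrL 𝕜 E F y = toLp 2 (0, y) := rfl

@[simp]
theorem fstL_comp_inlL : fstL 2 𝕜 E F ∘L inlL 𝕜 E F = .id 𝕜 E := rfl

variable [CompleteSpace E] [CompleteSpace F]

theorem adjoint_inlL : adjoint (inlL 𝕜 E F) = fstL 2 𝕜 E F :=
  ((eq_adjoint_iff _ _).2 fun z x => by simp [prod_inner_apply]).symm

theorem adjoint_inrL : adjoint (inrL 𝕜 E F) = sndL 2 𝕜 E F :=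
  ((eq_adjoint_iff _ _).2 fun z y => by simp [prod_inner_apply]).symm

theorem adjoint_fstL : adjoint (fstL 2 𝕜 E F) = inlL 𝕜 E F := by
  rw [← adjoint_inlL, adjoint_adjoint]

end WithLp

theorem ContinuousLinearMap.nonneg_of_forall_inner_nonneg {E : Type*} [NormedAddCommGroup E]
    [InnerProductSpace ℂ E] (T : E →L[ℂ] E) (hT : ∀ x, 0 ≤ ⟪T x, x⟫_ℂ) : 0 ≤ T :=
  (nonneg_iff_isPositive T).2 <| (isPositive_iff T).2
    ⟨(LinearMap.isSymmetric_iff_inner_map_self_real _).2 fun x =>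
      RCLike.conj_eq_iff_im.2 (RCLike.nonneg_iff.1 (hT x)).2, hT⟩

set_option synthInstance.maxHeartbeats 200000 in
theorem PiLp.exists_adjoint_comp_eq_of_blockOp_nonneg {ι : Type*} [Fintype ι] [DecidableEq ι]
    {H : Type*} [NormedAddCommGroup H] [InnerProductSpace ℂ H] [CompleteSpace H]
    (T : ι → ι → H →L[ℂ] H) (hT : 0 ≤ blockOp T) :
    ∃ S : ι → H →L[ℂ] PiLp 2 (fun _ : ι => H), ∀ i j, adjoint (S i) ∘L S j = T i j := by
  obtain ⟨R, hR⟩ := CStarAlgebra.nonneg_iff_eq_star_mul_self.1 hT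
  refine ⟨fun i => R ∘L singleL ℂ H i, fun i j => ?_⟩
  rw [← proj_comp_blockOp_comp_singleL T, hR, star_eq_adjoint, mul_def, adjoint_comp,
    adjoint_singleL]
  simp only [comp_assoc]

theorem exists_unitary_dilation {X : Type*} [Fintype X] [DecidableEq X]
    {H L : Type*} [NormedAddCommGroup H] [InnerProductSpace ℂ H] [CompleteSpace H]
    [NormedAddCommGroup L] [InnerProductSpace ℂ L] [CompleteSpace L]
    (S : X → X → H →L[ℂ] L)
    (hS : ∀ x x', ∑ a, adjoint (S x a) ∘L S x' a = if x = x' then 1 else 0) :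
    ∃ U ∈ unitary (Matrix X X (WithLp 2 (H × L) →L[ℂ] WithLp 2 (H × L))),
      ∀ a x, U a x ∘L WithLp.inlL ℂ H L = WithLp.inrL ℂ H L ∘L S x a := by
  set q : Matrix X X (WithLp 2 (H × L) →L[ℂ] WithLp 2 (H × L)) :=
    Matrix.diagonal fun _ => WithLp.inlL ℂ H L ∘L WithLp.fstL 2 ℂ H L
  set V : Matrix X X (WithLp 2 (H × L) →L[ℂ] WithLp 2 (H × L)) :=
    Matrix.of fun a x => WithLp.inrL ℂ H L ∘L S x a ∘L WithLp.fstL 2 ℂ H L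
  have hV : star V * V = q := by
    ext x x' : 2
    have hterm : (star V * V) x x' =
        WithLp.inlL ℂ H L ∘L (∑ a, adjoint (S x a) ∘L S x' a) ∘L WithLp.fstL 2 ℂ H L := by
      simp only [Matrix.mul_apply, Matrix.star_apply, V, Matrix.of_apply, star_eq_adjoint, mul_def,
        adjoint_comp, WithLp.adjoint_inrL, WithLp.adjoint_fstL, comp_finsetSum, finsetSum_comp]
      rfl
    rw [hterm, hS]
    by_cases hx : x = x' <;> simp [q, hx]
  have hVq : V * q = V := by
    ext a x : 2
    simp [V, q, Matrix.mul_diagonal, mul_def, comp_assoc]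
  have hqV : q * V = 0 := by
    ext a x : 2
    simp [V, q, Matrix.diagonal_mul, mul_def, comp_assoc]
  refine ⟨unitaryDilation q V, unitaryDilation_mem_unitary hV hVq hqV, fun a x => ?_⟩
  have h : (unitaryDilation q V * q) a x = V a x := by rw [unitaryDilation_mul hV hVq hqV]
  simp only [q, V, Matrix.mul_diagonal, Matrix.of_apply, mul_def] at h
  simpa [q, V, comp_assoc] using congrArg (· ∘L WithLp.inlL ℂ H L) h

/-- Every stochastic operator matrix `(E_{x,x',a,a'})` over `(X,X)` acting on a complex
Hilbert space `H` (block-positivity expressed through the quadratic form, together with the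
partial-trace condition `Σ_a E_{x,x',a,a} = δ_{x,x'} 1`) dilates to a unistochastic one:
there are a Hilbert space `K`, an isometry `W : H → K` and a family `(U_{a,x})` whose block
operator matrix is unitary (expressed by `Σ_a U_{a,x}* U_{a,x'} = δ_{x,x'} 1` and
`Σ_x U_{a,x} U_{a',x}* = δ_{a,a'} 1`) with `E_{x,x',a,a'} = W* U_{a,x}* U_{a',x'} W`. -/
theorem stmt_17 {H : Type u} [NormedAddCommGroup H] [InnerProductSpace ℂ H]
    [CompleteSpace H]
    (X : Type) [Fintype X] [DecidableEq X]
    (E : X → X → X → X → (H →L[ℂ] H))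
    (hpos : ∀ h : X → X → H,
      0 ≤ ∑ x : X, ∑ a : X, ∑ x' : X, ∑ a' : X,
            (inner ℂ (E x x' a a' (h x' a')) (h x a) : ℂ))
    (htr : ∀ x x' : X, ∑ a : X, E x x' a a = if x = x' then (1 : H →L[ℂ] H) else 0) :
    ∃ (K : Type u) (_ : NormedAddCommGroup K) (_ : InnerProductSpace ℂ K)
      (_ : CompleteSpace K) (W : H →L[ℂ] K) (U : X → X → K →L[ℂ] K),
      (∀ h : H, ‖W h‖ = ‖h‖) ∧
      (∀ x x' : X, ∑ a : X, ContinuousLinearMap.adjoint (U a x) ∘L U a x'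
          = if x = x' then (1 : K →L[ℂ] K) else 0) ∧
      (∀ a a' : X, ∑ x : X, U a x ∘L ContinuousLinearMap.adjoint (U a' x)
          = if a = a' then (1 : K →L[ℂ] K) else 0) ∧
      (∀ x x' a a' : X,
        E x x' a a' = ContinuousLinearMap.adjoint W ∘L
          (ContinuousLinearMap.adjoint (U a x) ∘L U a' x') ∘L W) := by
  set T : X × X → X × X → H →L[ℂ] H := fun p p' => E p.1 p'.1 p.2 p'.2
  have hT : 0 ≤ PiLp.blockOp T := nonneg_of_forall_inner_nonneg _ fun l => by
    simpa [PiLp.inner_blockOp_self, Fintype.sum_prod_type, T] using hpos fun x a => l (x, a)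
  obtain ⟨S, hS⟩ := PiLp.exists_adjoint_comp_eq_of_blockOp_nonneg T hT
  obtain ⟨U, hU, hUS⟩ := exists_unitary_dilation (fun x a => S (x, a)) fun x x' => by
    simpa only [hS] using htr x x'
  refine ⟨_, inferInstance, inferInstance, inferInstance, WithLp.inlL ℂ H _, U, fun h => by simp,
    fun x x' => ?_, fun a a' => ?_, fun x x' a a' => ?_⟩
  · have h := Matrix.ext_iff.2 (Unitary.star_mul_self_of_mem hU) x x'
    simpa only [Matrix.mul_apply, Matrix.star_apply, Matrix.one_apply, star_eq_adjoint, mul_def]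
      using h
  · have h := Matrix.ext_iff.2 (Unitary.mul_star_self_of_mem hU) a a'
    simpa only [Matrix.mul_apply, Matrix.star_apply, Matrix.one_apply, star_eq_adjoint, mul_def]
      using h
  · calc E x x' a a' = adjoint (S (x, a)) ∘L S (x', a') := (hS (x, a) (x', a')).symm
      _ = adjoint (U a x ∘L WithLp.inlL ℂ H _) ∘L (U a' x' ∘L WithLp.inlL ℂ H _) := by
        rw [hUS, hUS, adjoint_comp, WithLp.adjoint_inrL]; rfl
      _ = _ := by rw [adjoint_comp]; simp only [comp_assoc]
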